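/- Let F = ∏_i F_i be a product of fields with a G-action transitive on principal idempotents, H ≤ G with L = F^H stable under G. The essential image of the fully faithful functor F ⊗_L − : Rep^H_L(G) → Rep_F(G) is closed under subobjects and quotients. -/

import Mathlib

set_option synthInstance.maxHeartbeats 1000000
set_option maxHeartbeats 1000000

/-- The old (Mathlib, Dec 2024) multiplicative group structure on `AddAut M`:
`g * h = h.trans g`, `1 = refl`, `g⁻¹ = g.symm`. -/
instance addAutGroupOld (M : Type*) [Add M] : Group (AddAut M) where
  mul g h := AddEquiv.trans h g
  one := AddEquiv.refl _
  inv := AddEquiv.symm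
  mul_assoc _ _ _ := rfl
  one_mul _ := rfl
  mul_one _ := rfl
  inv_mul_cancel := AddEquiv.self_trans_symm

section Setup

variable {I : Type*} [DecidableEq I] {L : I → Type*} [∀ i, Field (L i)]
variable {G : Type*} [Group G] [MulSemiringAction G (∀ i, L i)]
variable (H : Subgroup G)
variable {V : Type*} [AddCommGroup V] [Module (∀ i, L i) V]
variable (μ : G →* AddAut V)

/-- The fixed subring `L = F^H` of the product of fields `F = ∏ᵢ Lᵢ`. -/
def fixedSubring : Subring (∀ i, L i) where
  carrier := {x | ∀ h ∈ H, h • x = x}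
  mul_mem' := by intro a b ha hb h hh; rw [smul_mul', ha h hh, hb h hh]
  one_mem' := by intro h hh; rw [smul_one]
  add_mem' := by intro a b ha hb h hh; rw [smul_add, ha h hh, hb h hh]
  zero_mem' := by intro h hh; rw [smul_zero]
  neg_mem' := by intro a ha h hh; rw [smul_neg, ha h hh]

variable (hsemi : ∀ (g : G) (a : ∀ i, L i) (v : V), μ g (a • v) = (g • a) • μ g v)

/-- The `H`-invariants `V^H` of `V`, as a module over `L = F^H`. -/
def invariants : Submodule (fixedSubring (L := L) H) V where
  carrier := {v | ∀ h ∈ H, μ h v = v}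
  add_mem' := by intro a b ha hb h hh; rw [map_add, ha h hh, hb h hh]
  zero_mem' := by intro h hh; exact map_zero (μ h)
  smul_mem' := by
    intro c v hv h hh
    show μ h ((c : ∀ i, L i) • v) = _
    rw [hsemi h c v, c.2 h hh, hv h hh]; rfl

noncomputable instance : Algebra (fixedSubring (L := L) H) (∀ i, L i) :=
  (fixedSubring (L := L) H).subtype.toAlgebra

/-- The natural map `F ⊗_L V^H → V`, `f ⊗ v ↦ f • v`. -/
noncomputable def natMap :
    TensorProduct (fixedSubring (L := L) H) (∀ i, L i) (invariants H μ hsemi)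
      →ₗ[fixedSubring (L := L) H] V :=
  TensorProduct.lift
    { toFun := fun a =>
        { toFun := fun w => a • (w : V)
          map_add' := by intro w w'; simp
          map_smul' := by
            intro c w
            show a • ((c : ∀ i, L i) • (w : V)) = (c : ∀ i, L i) • (a • (w : V))
            rw [smul_comm] }
      map_add' := by intro a a'; ext w; simp [add_smul]
      map_smul' := by
        intro c a; ext w
        show ((c : ∀ i, L i) * a) • (w : V) = (c : ∀ i, L i) • (a • (w : V))
        rw [mul_smul] }

end Setup

namespace Descent12


variable {K : Type*} [Field K] {n : ℕ}

def pivots (W : Submodule K (Fin n → K)) : Set (Fin n) :=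
  {k | ∃ w ∈ W, (∀ j, j < k → w j = 0) ∧ w k ≠ 0}

theorem eq_zero_of_vanish {W : Submodule K (Fin n → K)} {w : Fin n → K}
    (hw : w ∈ W) (h : ∀ k ∈ pivots W, w k = 0) : w = 0 := by
  classical
  by_contra hne
  have hs : (Finset.univ.filter (fun k => w k ≠ 0)).Nonempty := by
    by_contra hemp
    apply hne
    funext k
    by_contra hk
    simp only [Pi.zero_apply] at hk
    exact hemp ⟨k, by simp [hk]⟩
  set k := (Finset.univ.filter (fun k => w k ≠ 0)).min' hs with hkdef
  have hkmem : w k ≠ 0 := by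
    have := (Finset.univ.filter (fun k => w k ≠ 0)).min'_mem hs
    simpa using this
  have hklt : ∀ j, j < k → w j = 0 := by
    intro j hj
    by_contra hj0
    have : k ≤ j := (Finset.univ.filter (fun k => w k ≠ 0)).min'_le j (by simp [hj0])
    exact absurd hj (not_lt.2 this)
  exact hkmem (h k ⟨w, hw, hklt, hkmem⟩)

theorem exists_eq_on_pivots (W : Submodule K (Fin n → K)) (g : Fin n → K) :
    ∃ w ∈ W, ∀ j ∈ pivots W, w j = g j := by
  classical
  suffices h : ∀ m : ℕ, ∀ g : Fin n → K, (∀ j ∈ pivots W, (j : ℕ) < n - m → g j = 0) →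
      ∃ w ∈ W, ∀ j ∈ pivots W, w j = g j by
    exact h n g (fun j hj hlt => absurd hlt (by omega))
  intro m
  induction m with
  | zero =>
    intro g hg
    refine ⟨0, W.zero_mem, fun j hj => ?_⟩
    rw [hg j hj (by omega)]; rfl
  | succ m ih =>
    intro g hg
    by_cases hn : n ≤ m
    · exact ih g (fun j hj hlt => absurd hlt (by omega))
    · set k : Fin n := ⟨n - (m+1), by omega⟩ with hkdef
      by_cases hp : k ∈ pivots W
      · obtain ⟨w₀, hw₀, hlow, hne⟩ := hp
        set u : Fin n → K := (w₀ k)⁻¹ • w₀ with hu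
        have hu_mem : u ∈ W := W.smul_mem _ hw₀
        have huk : u k = 1 := by
          simp [hu, inv_mul_cancel₀ hne]
        have hulow : ∀ j, j < k → u j = 0 := by
          intro j hj; simp [hu, hlow j hj]
        obtain ⟨w'', hw''_mem, hw''⟩ := ih (g - g k • u) (fun j hj hlt => by
          rcases lt_trichotomy (j : ℕ) (n - (m+1)) with h1 | h1 | h1
          · have hjk : j < k := by rw [Fin.lt_def]; exact h1
            simp [hg j hj h1, hulow j hjk]
          · have : j = k := Fin.ext h1
            subst this
            simp [huk]
          · omega)
        refine ⟨g k • u + w'', W.add_mem (W.smul_mem _ hu_mem) hw''_mem, fun j hj => ?_⟩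
        have := hw'' j hj
        simp only [Pi.add_apply, Pi.smul_apply, Pi.sub_apply, smul_eq_mul] at this ⊢
        rw [this]; ring
      · refine ih g (fun j hj hlt => ?_)
        rcases lt_trichotomy (j : ℕ) (n - (m+1)) with h1 | h1 | h1
        · exact hg j hj h1
        · have hjk : j = k := Fin.ext h1
          exact absurd (hjk ▸ hj) hp
        · omega

noncomputable def rho (W : Submodule K (Fin n → K)) (m : Fin n) : Fin n → K :=
  Classical.choose (exists_eq_on_pivots W (fun j => if j = m then 1 else 0))

theorem rho_mem (W : Submodule K (Fin n → K)) (m : Fin n) : rho W m ∈ W :=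
  (Classical.choose_spec (exists_eq_on_pivots W (fun j => if j = m then 1 else 0))).1

theorem rho_spec (W : Submodule K (Fin n → K)) (m : Fin n) :
    ∀ j ∈ pivots W, rho W m j = if j = m then 1 else 0 :=
  (Classical.choose_spec (exists_eq_on_pivots W (fun j => if j = m then 1 else 0))).2

theorem rho_unique {W : Submodule K (Fin n → K)} {m : Fin n} {w : Fin n → K}
    (hw : w ∈ W) (hspec : ∀ j ∈ pivots W, w j = if j = m then (1:K) else 0) :
    w = rho W m := by
  have h0 : w - rho W m = 0 := by
    apply eq_zero_of_vanish (W.sub_mem hw (rho_mem W m))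
    intro j hj
    simp [Pi.sub_apply, hspec j hj, rho_spec W m j hj]
  have := sub_eq_zero.mp h0
  exact this

theorem eq_sum_rho {W : Submodule K (Fin n → K)} {w : Fin n → K} (hw : w ∈ W) :
    w = ∑ m : Fin n, w m • rho W m := by
  have hmem : ∑ m : Fin n, w m • rho W m ∈ W :=
    Submodule.sum_mem W (fun m _ => W.smul_mem _ (rho_mem W m))
  have h0 : w - ∑ m : Fin n, w m • rho W m = 0 := by
    apply eq_zero_of_vanish (W.sub_mem hw hmem)
    intro j hj
    simp only [Pi.sub_apply, Finset.sum_apply, Pi.smul_apply, smul_eq_mul]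
    rw [Finset.sum_congr rfl (fun m _ => by rw [rho_spec W m j hj])]
    simp
  exact sub_eq_zero.mp h0

theorem pivots_subset {K' : Type*} [Field K'] (φ : K ≃+* K')
    {W : Submodule K (Fin n → K)} {W' : Submodule K' (Fin n → K')}
    (hWW : ∀ x : Fin n → K, x ∈ W ↔ (fun k => φ (x k)) ∈ W') :
    pivots W ⊆ pivots W' := by
  rintro k ⟨w, hw, h1, h2⟩
  refine ⟨fun j => φ (w j), (hWW w).1 hw, fun j hj => ?_, fun h0 => h2 ?_⟩
  · show φ (w j) = 0
    rw [h1 j hj, map_zero]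
  · have h0' : φ (w k) = 0 := h0
    exact φ.injective (by rw [h0', map_zero])

theorem rho_map {K' : Type*} [Field K'] (φ : K ≃+* K')
    {W : Submodule K (Fin n → K)} {W' : Submodule K' (Fin n → K')}
    (hWW : ∀ x : Fin n → K, x ∈ W ↔ (fun k => φ (x k)) ∈ W') (m : Fin n) :
    (fun k => φ (rho W m k)) = rho W' m := by
  have hWW' : ∀ x : Fin n → K', x ∈ W' ↔ (fun k => φ.symm (x k)) ∈ W := by
    intro x
    rw [hWW (fun k => φ.symm (x k))]
    simp
  have hpiv : pivots W' ⊆ pivots W := pivots_subset φ.symm hWW'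
  apply rho_unique ((hWW _).1 (rho_mem W m))
  intro j hj
  rw [rho_spec W m j (hpiv hj)]
  split <;> simp


section Prod

variable {I : Type*} [DecidableEq I] {L : I → Type*} [∀ i, Field (L i)]
variable {G : Type*} [Group G] [MulSemiringAction G (∀ i, L i)]

theorem mul_single_one (x : ∀ i, L i) (j : I) :
    x * Pi.single j 1 = Pi.single j (x j) := by
  funext k
  by_cases h : k = j
  · subst h; simp
  · simp [Pi.single_eq_of_ne h]

theorem single_mul (i : I) (x y : L i) :
    (Pi.single i (x * y) : ∀ i, L i) = Pi.single i x * Pi.single i y := by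
  funext k
  by_cases h : k = i
  · subst h; simp
  · simp [Pi.single_eq_of_ne h]

theorem single_add' (i : I) (x y : L i) :
    (Pi.single i (x + y) : ∀ i, L i) = Pi.single i x + Pi.single i y := by
  funext k
  by_cases h : k = i
  · subst h; simp
  · simp [Pi.single_eq_of_ne h]

theorem single_ne_zero' (i : I) : (Pi.single i 1 : ∀ i, L i) ≠ 0 := by
  intro h
  have := congr_fun h i
  simp at this

/-- The action of `G` permutes the principal idempotents. -/
theorem perm (g : G) (i : I) :
    ∃ j, g • (Pi.single i 1 : ∀ i, L i) = Pi.single j 1 := by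
  set y := g • (Pi.single i 1 : ∀ i, L i) with hy
  have hy2 : y * y = y := by
    rw [hy, ← smul_mul']
    congr 1
    rw [mul_single_one, Pi.single_eq_same]
  have hyne : y ≠ 0 := by
    intro h0
    apply single_ne_zero' (L := L) i
    have : g⁻¹ • y = g⁻¹ • (0 : ∀ i, L i) := by rw [h0]
    rwa [hy, inv_smul_smul, smul_zero] at this
  have hex : ∃ j, y j ≠ 0 := by
    by_contra hall
    push_neg at hall
    exact hyne (funext fun j => hall j)
  obtain ⟨j, hj⟩ := hex
  have hyj : y j = 1 := by
    have := congr_fun hy2 j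
    rw [Pi.mul_apply] at this
    exact mul_left_cancel₀ hj (by rw [this, mul_one])
  refine ⟨j, ?_⟩
  -- z = g⁻¹ • e_j equals e_i
  set z := g⁻¹ • (Pi.single j 1 : ∀ i, L i) with hz
  have hejy : Pi.single j (1 : L j) * y = Pi.single j 1 := by
    rw [mul_comm, mul_single_one, hyj]
  have hzi : z * Pi.single i 1 = z := by
    have : (Pi.single i 1 : ∀ i, L i) = g⁻¹ • y := by rw [hy, inv_smul_smul]
    rw [this, hz, ← smul_mul', hejy]
  have hz_single : z = Pi.single i (z i) := by
    have h' := mul_single_one z i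
    rw [hzi] at h'
    exact h'
  have hee : (Pi.single j 1 : ∀ i, L i) * Pi.single j 1 = Pi.single j 1 := by
    rw [mul_single_one, Pi.single_eq_same]
  have hz2 : z * z = z := by
    rw [hz, ← smul_mul', hee]
  have hzne : z ≠ 0 := by
    intro h0
    apply single_ne_zero' (L := L) j
    have : g • z = g • (0 : ∀ i, L i) := by rw [h0]
    rwa [hz, smul_inv_smul, smul_zero] at this
  have hzi_ne : z i ≠ 0 := by
    intro h0
    exact hzne (by rw [hz_single, h0]; simp)
  have hzi1 : z i = 1 := by
    have := congr_fun hz2 i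
    rw [Pi.mul_apply] at this
    exact mul_left_cancel₀ hzi_ne (by rw [this, mul_one])
  have hz1 : z = Pi.single i 1 := by rw [hz_single, hzi1]
  show g • (Pi.single i 1 : ∀ i, L i) = Pi.single j 1
  rw [← hz1, hz, smul_inv_smul]

theorem smul_single_eq (g : G) {i j : I} (hij : g • (Pi.single i 1 : ∀ i, L i) = Pi.single j 1)
    (x : L i) :
    g • (Pi.single i x : ∀ i, L i) = Pi.single j ((g • (Pi.single i x : ∀ i, L i)) j) := by
  conv_lhs => rw [show (Pi.single i x : ∀ i, L i) = Pi.single i x * Pi.single i 1 by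
    rw [mul_single_one, Pi.single_eq_same]]
  rw [smul_mul', hij, mul_single_one]

theorem inv_single (g : G) {i j : I} (hij : g • (Pi.single i 1 : ∀ i, L i) = Pi.single j 1) :
    g⁻¹ • (Pi.single j 1 : ∀ i, L i) = Pi.single i 1 := by
  rw [← hij, inv_smul_smul]

/-- The field isomorphism `L i ≃+* L j` induced by `g` when `g • eᵢ = eⱼ`. -/
noncomputable def fieldMap (g : G) {i j : I}
    (hij : g • (Pi.single i 1 : ∀ i, L i) = Pi.single j 1) : L i ≃+* L j where
  toFun x := (g • (Pi.single i x : ∀ i, L i)) j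
  invFun y := (g⁻¹ • (Pi.single j y : ∀ i, L i)) i
  left_inv x := by
    have h1 := smul_single_eq g hij x
    have : g⁻¹ • (Pi.single j ((g • (Pi.single i x : ∀ i, L i)) j) : ∀ i, L i)
        = Pi.single i x := by rw [← h1, inv_smul_smul]
    show (g⁻¹ • (Pi.single j ((g • (Pi.single i x : ∀ i, L i)) j) : ∀ i, L i)) i = x
    rw [this, Pi.single_eq_same]
  right_inv y := by
    have h1 := smul_single_eq g⁻¹ (inv_single g hij) y
    have : g • (Pi.single i ((g⁻¹ • (Pi.single j y : ∀ i, L i)) i) : ∀ i, L i)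
        = Pi.single j y := by rw [← h1, smul_inv_smul]
    show (g • (Pi.single i ((g⁻¹ • (Pi.single j y : ∀ i, L i)) i) : ∀ i, L i)) j = y
    rw [this, Pi.single_eq_same]
  map_mul' x y := by
    show (g • (Pi.single i (x * y) : ∀ i, L i)) j
        = (g • (Pi.single i x : ∀ i, L i)) j * (g • (Pi.single i y : ∀ i, L i)) j
    rw [single_mul, smul_mul', Pi.mul_apply]
  map_add' x y := by
    have : (Pi.single i (x + y) : ∀ i, L i) = Pi.single i x + Pi.single i y :=
      single_add' i x y
    show (g • (Pi.single i (x + y) : ∀ i, L i)) j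
        = (g • (Pi.single i x : ∀ i, L i)) j + (g • (Pi.single i y : ∀ i, L i)) j
    rw [this, smul_add, Pi.add_apply]

theorem smul_apply_eq (g : G) {i j : I} (hij : g • (Pi.single i 1 : ∀ i, L i) = Pi.single j 1)
    (x : ∀ i, L i) : (g • x) j = fieldMap g hij (x i) := by
  show (g • x) j = (g • (Pi.single i (x i) : ∀ i, L i)) j
  have h1 : (g • x) * Pi.single j 1 = g • (Pi.single i (x i) : ∀ i, L i) := by
    rw [← hij, ← smul_mul', mul_single_one]
  rw [← h1, mul_single_one, Pi.single_eq_same]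

variable (H : Subgroup G)

/-- The key descent lemma: an `H`-stable saturated submodule of `F^n` is
spanned by its `H`-invariant elements. -/
theorem key (n : ℕ) (A : Submodule (∀ i, L i) (Fin n → ∀ i, L i))
    (hA : ∀ h ∈ H, ∀ a ∈ A, (fun k => h • a k) ∈ A)
    (hsat : ∀ a : Fin n → ∀ i, L i,
      (∀ i : I, (fun k => Pi.single i 1 * a k) ∈ A) → a ∈ A) :
    A ≤ Submodule.span (∀ i, L i)
      {a : Fin n → ∀ i, L i | a ∈ A ∧ ∀ h ∈ H, (fun k => h • a k) = a} := by
  classical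
  -- component subspaces
  have single_one_mul : ∀ (i : I) (x : ∀ i, L i),
      Pi.single i 1 * x = Pi.single i (x i) := fun i x => by
    rw [mul_comm, mul_single_one]
  set Ac : ∀ i : I, Submodule (L i) (Fin n → L i) := fun i =>
    { carrier := {x | (fun k => (Pi.single i (x k) : ∀ i, L i)) ∈ A}
      add_mem' := by
        intro a b ha hb
        have : (fun k => (Pi.single i (a k + b k) : ∀ i, L i))
            = (fun k => (Pi.single i (a k) : ∀ i, L i)) + fun k => Pi.single i (b k) := by
          funext k; exact single_add' i (a k) (b k)
        show (fun k => (Pi.single i ((a + b) k) : ∀ i, L i)) ∈ A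
        simp only [Pi.add_apply]
        rw [this]
        exact A.add_mem ha hb
      zero_mem' := by
        show (fun k => (Pi.single i ((0 : Fin n → L i) k) : ∀ i, L i)) ∈ A
        have : (fun k => (Pi.single i ((0 : Fin n → L i) k) : ∀ i, L i)) = 0 := by
          funext k; simp
        rw [this]; exact A.zero_mem
      smul_mem' := by
        intro c x hx
        show (fun k => (Pi.single i ((c • x) k) : ∀ i, L i)) ∈ A
        have : (fun k => (Pi.single i ((c • x) k) : ∀ i, L i))
            = (Pi.single i c : ∀ i, L i) • fun k => (Pi.single i (x k) : ∀ i, L i) := by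
          funext k
          show (Pi.single i (c * x k) : ∀ i, L i) = Pi.single i c * Pi.single i (x k)
          exact single_mul i c (x k)
        rw [this]
        exact A.smul_mem _ hx } with hAc
  have mem_Ac : ∀ (i : I) (x : Fin n → L i),
      x ∈ Ac i ↔ (fun k => (Pi.single i (x k) : ∀ i, L i)) ∈ A := fun i x => Iff.rfl
  -- components of elements of A
  have comp_mem : ∀ a ∈ A, ∀ i : I, (fun k => a k i) ∈ Ac i := by
    intro a ha i
    rw [mem_Ac]
    have : (fun k => (Pi.single i (a k i) : ∀ i, L i))
        = (Pi.single i 1 : ∀ i, L i) • a := by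
      funext k
      show (Pi.single i (a k i) : ∀ i, L i) = Pi.single i 1 * a k
      rw [single_one_mul]
    rw [this]
    exact A.smul_mem _ ha
  -- the canonical invariant elements
  set c : Fin n → (Fin n → ∀ i, L i) := fun m k i => rho (Ac i) m k with hc
  have hcA : ∀ m, c m ∈ A := by
    intro m
    apply hsat
    intro i
    have : (fun k => Pi.single i 1 * c m k) = fun k => (Pi.single i (rho (Ac i) m k) : ∀ i, L i) := by
      funext k
      rw [single_one_mul]
    rw [this]
    exact (mem_Ac i _).1 (rho_mem (Ac i) m)
  -- transport under h ∈ H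
  have hAc_map : ∀ h ∈ H, ∀ (i j : I)
      (hij : h • (Pi.single i 1 : ∀ i, L i) = Pi.single j 1),
      ∀ x : Fin n → L i, x ∈ Ac i ↔ (fun k => fieldMap h hij (x k)) ∈ Ac j := by
    intro h hH i j hij x
    rw [mem_Ac, mem_Ac]
    have heq : (fun k => (Pi.single j (fieldMap h hij (x k)) : ∀ i, L i))
        = fun k => h • (Pi.single i (x k) : ∀ i, L i) := by
      funext k
      rw [show (fieldMap h hij (x k) : L j) = (h • (Pi.single i (x k) : ∀ i, L i)) j from rfl]
      exact (smul_single_eq h hij (x k)).symm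
    rw [heq]
    constructor
    · intro hmem
      exact hA h hH _ hmem
    · intro hmem
      have := hA h⁻¹ (H.inv_mem hH) _ hmem
      have heq2 : (fun k => h⁻¹ • h • (Pi.single i (x k) : ∀ i, L i))
          = fun k => (Pi.single i (x k) : ∀ i, L i) := by
        funext k; rw [inv_smul_smul]
      rwa [heq2] at this
  -- invariance of c m
  have hcinv : ∀ m, ∀ h ∈ H, (fun k => h • c m k) = c m := by
    intro m h hH
    funext k
    funext j
    obtain ⟨i, hij'⟩ := perm (L := L) h⁻¹ j
    have hij : h • (Pi.single i 1 : ∀ i, L i) = Pi.single j 1 := by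
      rw [← hij', smul_inv_smul]
    rw [smul_apply_eq h hij (c m k)]
    show fieldMap h hij (rho (Ac i) m k) = rho (Ac j) m k
    have := rho_map (fieldMap h hij) (W := Ac i) (W' := Ac j) (hAc_map h hH i j hij) m
    exact congr_fun this k
  -- spanning
  intro a ha
  have hrep : a = ∑ m : Fin n, a m • c m := by
    funext k
    funext i
    have h1 := congr_fun (eq_sum_rho (comp_mem a ha i)) k
    simp only [Finset.sum_apply, Pi.smul_apply, smul_eq_mul] at h1 ⊢
    exact h1
  rw [hrep]
  exact Submodule.sum_mem _ fun m _ =>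
    Submodule.smul_mem _ _ (Submodule.subset_span ⟨hcA m, hcinv m⟩)

end Prod

end Descent12



/-- Let `F = ∏ᵢ Lᵢ` be a product of fields with a `G`-action
transitive on the principal idempotents, `H ≤ G` with `L = F^H` stable under
`G`.  The essential image of `F ⊗_L − : Rep^H_L(G) → Rep_F(G)`, i.e. the class
of objects `V` with `F·V^H = V`, is closed under subobjects and quotients:
for `V` in the essential image and `U ⊆ V` a `G`-stable `F`-submodule which is
itself an object of `Rep_F(G)`, both `U` and `V/U` (with its induced action)
satisfy the analogous condition `F·(−)^H = (−)`. -/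
theorem essImage_closed_under_subquotients
    {I : Type*} [DecidableEq I] {L : I → Type*} [∀ i, Field (L i)]
    {G : Type*} [Group G] [MulSemiringAction G (∀ i, L i)]
    (H : Subgroup G)
    (htrans : ∀ i j : I, ∃ g : G,
      g • (Pi.single i (1 : L i) : ∀ i, L i) = Pi.single j (1 : L j))
    (hGL : ∀ (g : G) (x : ∀ i, L i),
      x ∈ fixedSubring (L := L) H → g • x ∈ fixedSubring (L := L) H)
    {V : Type*} [AddCommGroup V] [Module (∀ i, L i) V]
    (μ : G →* AddAut V)
    (hsemi : ∀ (g : G) (a : ∀ i, L i) (v : V), μ g (a • v) = (g • a) • μ g v)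
    (r : ℕ) (b : Module.Basis (Fin r) (∀ i, L i) V)
    (hinj : ∀ v : V, (∀ i : I, (Pi.single i (1 : L i) : ∀ i, L i) • v = 0) → v = 0)
    (hsurj : ∀ f : I → V,
      (∀ i, ∃ v : V, f i = (Pi.single i (1 : L i) : ∀ i, L i) • v) →
      ∃ v : V, ∀ i, (Pi.single i (1 : L i) : ∀ i, L i) • v = f i)
    -- `V` lies in the essential image: `F · V^H = V`
    (hV : Submodule.span (∀ i, L i) ((invariants H μ hsemi : Set V)) = ⊤)
    -- a `G`-stable subobject `U ⊆ V` which is an object of `Rep_F(G)`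
    (U : Submodule (∀ i, L i) V)
    (hUstable : ∀ (g : G), ∀ v ∈ U, μ g v ∈ U)
    (s : ℕ) (bU : Module.Basis (Fin s) (∀ i, L i) U)
    (hUinj : ∀ v ∈ U, (∀ i : I, (Pi.single i (1 : L i) : ∀ i, L i) • v = 0) → v = 0)
    (hUsurj : ∀ f : I → V, (∀ i, f i ∈ U) →
      (∀ i, ∃ v ∈ U, f i = (Pi.single i (1 : L i) : ∀ i, L i) • v) →
      ∃ v ∈ U, ∀ i, (Pi.single i (1 : L i) : ∀ i, L i) • v = f i)
    -- the induced action on the quotient `V/U`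
    (μQ : G →* AddAut (V ⧸ U))
    (hμQ : ∀ (g : G) (v : V),
      μQ g (Submodule.Quotient.mk v) = Submodule.Quotient.mk (μ g v)) :
    -- the subobject lies in the essential image
    Submodule.span (∀ i, L i) ((U : Set V) ∩ (invariants H μ hsemi : Set V)) = U ∧
    -- the quotient lies in the essential image
    Submodule.span (∀ i, L i) {x : V ⧸ U | ∀ h ∈ H, μQ h x = x} = ⊤ := by
  classical
  have single_idem : ∀ i : I, (Pi.single i 1 : ∀ i, L i) * Pi.single i 1 = Pi.single i 1 := by
    intro i
    rw [Descent12.mul_single_one, Pi.single_eq_same]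
  -- saturation of U
  have hU_sat : ∀ v : V, (∀ i, (Pi.single i 1 : ∀ i, L i) • v ∈ U) → v ∈ U := by
    intro v hv
    obtain ⟨v', hv'U, hv'⟩ := hUsurj (fun i => (Pi.single i 1 : ∀ i, L i) • v)
      (fun i => hv i)
      (fun i => ⟨(Pi.single i 1 : ∀ i, L i) • v, hv i, by rw [smul_smul, single_idem]⟩)
    have h0 : v' - v = 0 := hinj _ (fun i => by rw [smul_sub, hv' i, sub_self])
    rw [← sub_eq_zero.mp h0]
    exact hv'U
  -- finite spanning set of invariants
  have hbmem : ∀ k : Fin r, b k ∈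
      Submodule.span (∀ i, L i) ((invariants H μ hsemi : Set V)) := by
    intro k; rw [hV]; trivial
  choose t ht1 ht2 using fun k : Fin r =>
    Submodule.mem_span_finite_of_mem_span (hbmem k)
  set T0 : Finset V := Finset.univ.biUnion t with hT0
  have hT0sub : (↑T0 : Set V) ⊆ (invariants H μ hsemi : Set V) := by
    intro x hx
    rw [hT0] at hx
    simp only [Finset.coe_biUnion, Finset.coe_univ, Set.mem_iUnion, Finset.mem_coe] at hx
    obtain ⟨k, _, hk⟩ := hx
    exact ht1 k hk
  have hT0span : Submodule.span (∀ i, L i) (↑T0 : Set V) = ⊤ := by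
    rw [eq_top_iff, ← b.span_eq]
    apply Submodule.span_le.2
    rintro x ⟨k, rfl⟩
    refine Submodule.span_mono ?_ (ht2 k)
    intro y hy
    rw [hT0]
    simp only [Finset.coe_biUnion, Finset.coe_univ, Set.mem_iUnion, Finset.mem_coe]
    exact ⟨k, trivial, hy⟩
  set n := T0.card with hn
  set w : Fin n → V := fun m => ((T0.equivFin.symm m : T0) : V) with hwdef
  have hw_inv : ∀ m, ∀ h ∈ H, μ h (w m) = w m := by
    intro m
    exact hT0sub (T0.equivFin.symm m).2
  have hw_range : Set.range w = (↑T0 : Set V) := by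
    ext x
    constructor
    · rintro ⟨m, rfl⟩
      exact (T0.equivFin.symm m).2
    · intro hx
      exact ⟨T0.equivFin ⟨x, hx⟩, by rw [hwdef]; simp⟩
  have hw_span : Submodule.span (∀ i, L i) (Set.range w) = ⊤ := by
    rw [hw_range]; exact hT0span
  -- the linear map from coordinates
  set T : (Fin n → ∀ i, L i) →ₗ[∀ i, L i] V :=
    { toFun := fun a => ∑ m, a m • w m
      map_add' := by
        intro a a'
        simp only [Pi.add_apply, add_smul]
        rw [Finset.sum_add_distrib]
      map_smul' := by
        intro c a
        simp only [Pi.smul_apply, smul_eq_mul, RingHom.id_apply, mul_smul]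
        rw [Finset.smul_sum] } with hTdef
  have hT_apply : ∀ a : Fin n → ∀ i, L i, T a = ∑ m, a m • w m := fun a => rfl
  set A : Submodule (∀ i, L i) (Fin n → ∀ i, L i) := U.comap T with hAdef
  have hTA_h : ∀ h ∈ H, ∀ a : Fin n → ∀ i, L i,
      T (fun k => h • a k) = μ h (T a) := by
    intro h hH a
    rw [hT_apply, hT_apply, map_sum (μ h)]
    refine Finset.sum_congr rfl fun m _ => ?_
    rw [hsemi h (a m) (w m), hw_inv m h hH]
  have hA_stable : ∀ h ∈ H, ∀ a ∈ A, (fun k => h • a k) ∈ A := by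
    intro h hH a ha
    show T _ ∈ U
    rw [hTA_h h hH a]
    exact hUstable h _ ha
  have hA_sat : ∀ a : Fin n → ∀ i, L i,
      (∀ i : I, (fun k => Pi.single i 1 * a k) ∈ A) → a ∈ A := by
    intro a ha
    show T a ∈ U
    apply hU_sat
    intro i
    have h2 := ha i
    have heq : (fun k => (Pi.single i 1 : ∀ i, L i) * a k)
        = (Pi.single i 1 : ∀ i, L i) • a := rfl
    rw [heq] at h2
    have h3 : T ((Pi.single i 1 : ∀ i, L i) • a) ∈ U := h2
    rwa [map_smul] at h3
  have hkey := Descent12.key H n A hA_stable hA_sat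
  constructor
  · apply le_antisymm
    · exact Submodule.span_le.2 (fun x hx => hx.1)
    · intro u hu
      obtain ⟨a, ha⟩ := (Submodule.mem_span_range_iff_exists_fun (∀ i, L i)).1
        (hw_span ▸ Submodule.mem_top (x := u))
      have hTa : T a = u := ha
      have haA : a ∈ A := by
        show T a ∈ U
        rw [hTa]; exact hu
      have haspan := hkey haA
      have hTspan : T a ∈ Submodule.map T (Submodule.span (∀ i, L i)
          {a : Fin n → ∀ i, L i | a ∈ A ∧ ∀ h ∈ H, (fun k => h • a k) = a}) :=
        Submodule.mem_map_of_mem haspan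
      rw [Submodule.map_span] at hTspan
      have himg : T '' {a : Fin n → ∀ i, L i | a ∈ A ∧ ∀ h ∈ H, (fun k => h • a k) = a}
          ⊆ (U : Set V) ∩ (invariants H μ hsemi : Set V) := by
        rintro x ⟨s, hs, rfl⟩
        refine ⟨hs.1, ?_⟩
        intro h hH
        rw [← hTA_h h hH s, hs.2 h hH]
      rw [← hTa]
      exact Submodule.span_mono himg hTspan
  · rw [eq_top_iff]
    have hmap : Submodule.map U.mkQ (Submodule.span (∀ i, L i)
        ((invariants H μ hsemi : Set V))) = ⊤ := by
      rw [hV, Submodule.map_top, Submodule.range_mkQ]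
    rw [Submodule.map_span] at hmap
    have hsub : U.mkQ '' (invariants H μ hsemi : Set V)
        ⊆ {x : V ⧸ U | ∀ h ∈ H, μQ h x = x} := by
      rintro x ⟨v, hv, rfl⟩ h hH
      rw [Submodule.mkQ_apply, hμQ h v, hv h hH]
    rw [← hmap]
    exact Submodule.span_mono hsub
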